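/- arXiv:1902.01062 — 2 statements merged into one kernel-verified Lean document; each statement's English description precedes it below -/
import Mathlib

section
/- Let g ∈ ℂ^M be a window and Λ = F × ℤ_M for some nonempty F ⊆ ℤ_M. Then the Gabor system (g,Λ) = {π(k,ℓ)g}_{(k,ℓ)∈Λ} spans ℂ^M if and only if for every m ∈ ℤ_M one has Σ_{k∈F} |g(m−k)|² ≠ 0 (that is, min_{m∈ℤ_M} ‖g_{F_m}‖₂ ≠ 0, where F_m = {m−k : k∈F} and g_{F_m} is the restriction of g to F_m). -/
/-!
If `∑_{k ∈ F} |g(m - k)|² = 0`, every generator `π(k, ℓ) g` vanishes at `m`, so the span lies in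
the kernel of evaluation at `m`. Otherwise pick `k ∈ F` with `g(m - k) ≠ 0`: by orthogonality of the
characters of `ℤ_M`, `∑_ℓ e^{-2πiℓm/M} M_ℓ T_k g = M g(m - k) δ_m`, so every unit vector `δ_m`
lies in the span.
-/

open MeasureTheory ProbabilityTheory Complex Finset
open scoped Real BigOperators Classical

noncomputable section

/-- Time–frequency shift `π(k,ℓ) g = M_ℓ T_k g`. -/
def tfShift (M : ℕ) (k l : ZMod M) (g : ZMod M → ℂ) : ZMod M → ℂ :=
  fun m => Complex.exp (2 * (Real.pi : ℂ) * Complex.I * (l.val : ℂ) * (m.val : ℂ) / (M : ℂ)) *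
    g (m - k)

/-- Squared ℓ²-norm on ℂ^M. -/
def nsq (M : ℕ) [NeZero M] (x : ZMod M → ℂ) : ℝ :=
  ∑ m : ZMod M, ‖x m‖ ^ 2

/-- Inner product ⟨x,y⟩ = ∑ x(m)·conj(y(m)). -/
def inn (M : ℕ) [NeZero M] (x y : ZMod M → ℂ) : ℂ :=
  ∑ m : ZMod M, x m * (starRingEnd ℂ) (y m)

/-- Frame operator Φ_Λ Φ_Λ^* of the Gabor system (g, Λ). -/
def frameOp (M : ℕ) [NeZero M] (Λ : Finset (ZMod M × ZMod M)) (g : ZMod M → ℂ) :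
    Matrix (ZMod M) (ZMod M) ℂ :=
  fun m1 m2 => ∑ kl ∈ Λ,
    tfShift M kl.1 kl.2 g m1 * (starRingEnd ℂ) (tfShift M kl.1 kl.2 g m2)

/-- A Steinhaus window: g(m) = M^{-1/2} e^{2πi y_m} with y_m i.i.d. uniform on [0,1). -/
def IsSteinhaus (M : ℕ) {Ω : Type*} [MeasurableSpace Ω] (P : Measure Ω)
    (g : Ω → ZMod M → ℂ) : Prop :=
  ∃ y : ZMod M → Ω → ℝ,
    (∀ m, Measurable (y m)) ∧
    iIndepFun y P ∧
    (∀ m, Measure.map (y m) P = volume.restrict (Set.Ico (0 : ℝ) 1)) ∧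
    (∀ ω m, g ω m = (1 / Real.sqrt M : ℝ) *
      Complex.exp (2 * (Real.pi : ℂ) * Complex.I * (y m ω)))

/-- A complex Gaussian window g ~ CN(0, (1/M) I_M): the 2M real coordinates are
independent centered Gaussians of variance 1/(2M). -/
def IsGaussianWindow (M : ℕ) {Ω : Type*} [MeasurableSpace Ω] (P : Measure Ω)
    (g : Ω → ZMod M → ℂ) : Prop :=
  ∃ u : ZMod M × Bool → Ω → ℝ,
    (∀ i, Measurable (u i)) ∧
    iIndepFun u P ∧
    (∀ i, Measure.map (u i) P = gaussianReal 0 (1 / (2 * M) : NNReal)) ∧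
    (∀ ω m, g ω m = (u (m, false) ω : ℂ) + (u (m, true) ω : ℂ) * Complex.I)

lemma tfShift_apply_eq_stdAddChar (M : ℕ) [NeZero M] (k l : ZMod M) (g : ZMod M → ℂ)
    (m : ZMod M) : tfShift M k l g m = ZMod.stdAddChar (l * m) * g (m - k) := by
  have hlm : l * m = ((l.val * m.val : ℕ) : ZMod M) := by
    rw [Nat.cast_mul, ZMod.natCast_zmod_val, ZMod.natCast_zmod_val]
  rw [tfShift, hlm, ZMod.stdAddChar_apply, ZMod.toCircle_natCast]
  push_cast
  ring_nf

lemma sum_stdAddChar_smul_tfShift (M : ℕ) [NeZero M] (k m : ZMod M) (g : ZMod M → ℂ) :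
    ∑ l : ZMod M, ZMod.stdAddChar (-(l * m)) • tfShift M k l g =
      ((M : ℂ) * g (m - k)) • Pi.single m 1 := by
  ext m'
  have hchar : ∀ l : ZMod M, ZMod.stdAddChar (-(l * m)) * ZMod.stdAddChar (l * m') =
      ZMod.stdAddChar (l * (m' - m)) := fun l => by
    rw [← AddChar.map_add_eq_mul]; ring_nf
  simp only [Finset.sum_apply, Pi.smul_apply, smul_eq_mul, tfShift_apply_eq_stdAddChar,
    ← mul_assoc, hchar, ← Finset.sum_mul,
    AddChar.sum_mulShift _ (ZMod.isPrimitive_stdAddChar M), sub_eq_zero, ZMod.card]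
  by_cases h : m' = m
  · subst h; simp
  · simp [h]

lemma single_mem_span_of_tfShift_mem {M : ℕ} [NeZero M] {k m : ZMod M} {g : ZMod M → ℂ}
    {S : Set (ZMod M → ℂ)} (hS : ∀ l, tfShift M k l g ∈ S) (hg : g (m - k) ≠ 0) :
    Pi.single m 1 ∈ Submodule.span ℂ S := by
  have hmem : ∑ l : ZMod M, ZMod.stdAddChar (-(l * m)) • tfShift M k l g ∈
      Submodule.span ℂ S :=
    Submodule.sum_mem _ fun l _ => Submodule.smul_mem _ _ (Submodule.subset_span (hS l))
  rw [sum_stdAddChar_smul_tfShift] at hmem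
  have hunit : (M : ℂ) * g (m - k) ≠ 0 := mul_ne_zero (Nat.cast_ne_zero.2 (NeZero.ne M)) hg
  exact (Submodule.smul_mem_iff _ hunit).1 hmem

lemma span_eq_top_of_forall_single_mem {K ι : Type*} [Field K] [Finite ι] [DecidableEq ι]
    {S : Set (ι → K)} (hS : ∀ i, Pi.single i 1 ∈ Submodule.span K S) :
    Submodule.span K S = ⊤ := by
  rw [eq_top_iff, ← (Pi.basisFun K ι).span_eq, Submodule.span_le]
  rintro _ ⟨i, rfl⟩
  simpa using hS i

lemma span_ne_top_of_forall_apply_eq_zero {K ι : Type*} [Field K] [DecidableEq ι]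
    {S : Set (ι → K)} (i : ι) (hS : ∀ v ∈ S, v i = 0) : Submodule.span K S ≠ ⊤ := by
  intro htop
  have hle : Submodule.span K S ≤ LinearMap.ker (LinearMap.proj i) :=
    Submodule.span_le.2 hS
  have := hle (htop ▸ Submodule.mem_top : Pi.single i (1 : K) ∈ Submodule.span K S)
  simp at this

theorem stmt8_general (M : ℕ) [NeZero M] (g : ZMod M → ℂ) (F : Finset (ZMod M)) :
    Submodule.span ℂ
        {v : ZMod M → ℂ | ∃ kl ∈ F ×ˢ (Finset.univ : Finset (ZMod M)),
          v = tfShift M kl.1 kl.2 g} = ⊤ ↔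
      ∀ m : ZMod M, ∑ k ∈ F, ‖g (m - k)‖ ^ 2 ≠ 0 := by
  have hsum : ∀ m, ∑ k ∈ F, ‖g (m - k)‖ ^ 2 ≠ 0 ↔ ∃ k ∈ F, g (m - k) ≠ 0 := fun m => by
    simp [Finset.sum_eq_zero_iff_of_nonneg]
  simp only [hsum]
  constructor
  · intro hspan m
    by_contra! hm
    refine span_ne_top_of_forall_apply_eq_zero m ?_ hspan
    rintro v ⟨⟨k, l⟩, hkl, rfl⟩
    simp [tfShift, hm k (Finset.mem_product.1 hkl).1]
  · intro h
    refine span_eq_top_of_forall_single_mem fun m => ?_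
    obtain ⟨k, hk, hgk⟩ := h m
    exact single_mem_span_of_tfShift_mem
      (fun l => ⟨(k, l), Finset.mem_product.2 ⟨hk, Finset.mem_univ _⟩, rfl⟩) hgk

/-- For Λ = F × ℤ_M, the Gabor system (g,Λ) spans ℂ^M iff
Σ_{k∈F}|g(m−k)|² ≠ 0 for every m. -/
theorem stmt8 (M : ℕ) [NeZero M] (g : ZMod M → ℂ) (F : Finset (ZMod M)) (hF : F.Nonempty) :
    Submodule.span ℂ
        {v : ZMod M → ℂ | ∃ kl ∈ F ×ˢ (Finset.univ : Finset (ZMod M)),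
          v = tfShift M kl.1 kl.2 g} = ⊤ ↔
      ∀ m : ZMod M, ∑ k ∈ F, ‖g (m - k)‖ ^ 2 ≠ 0 :=
  stmt8_general M g F
end
end

section
/- Let g be a complex Gaussian window in ℂ^M, let F ⊆ ℤ_M be nonempty, and let Λ = F × ℤ_M. Then with probability at least 1 − M·(e^{−2|F|} + e^{−|F|/8}), for every x ∈ ℂ^M: (|F|/2)·‖x‖₂² ≤ Σ_{(k,ℓ)∈Λ} |⟨x, π(k,ℓ)g⟩|² ≤ 5|F|·‖x‖₂². -/
open MeasureTheory ProbabilityTheory Complex Finset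
open scoped Real BigOperators Classical

noncomputable section

/-!
For `Λ = F × ℤ_M`, summing `|⟨x, π(k,ℓ) g⟩|²` over all modulations `ℓ` is Parseval's identity for
the DFT of `x · conj (T_k g)`, so the frame operator is diagonal:
`∑_{(k,ℓ) ∈ Λ} |⟨x, π(k,ℓ) g⟩|² = ∑_m |x(m)|² · M ∑_{k ∈ F} |g(m - k)|²`.
Each diagonal entry is a sum of `2|F|` independent squares of `N(0, 1/2)` variables, i.e. a
`Gamma(|F|, 1)` variable with moment generating function `(1 - t)⁻¹ ^ |F|`. Chernoff bounds at
`t = -1` and `t = 4/5` keep it in `[|F|/2, 5|F|]` up to probability `e^{-|F|/8} + e^{-2|F|}`, and a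
union bound over the `M` diagonal entries concludes.
-/

open ComplexConjugate

namespace ZMod

variable {N : ℕ} [NeZero N]

lemma conj_stdAddChar (j : ZMod N) : conj (stdAddChar j) = stdAddChar (-j) := by
  rw [AddChar.map_neg_eq_inv, stdAddChar_apply, ← Circle.coe_inv_eq_conj, Circle.coe_inv]

lemma sum_stdAddChar_mul_mul_conj (a b : ZMod N) :
    ∑ l : ZMod N, stdAddChar (l * a) * conj (stdAddChar (l * b)) =
      if a = b then (N : ℂ) else 0 := by
  simp_rw [conj_stdAddChar, ← AddChar.map_add_eq_mul, ← mul_neg, ← mul_add,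
    AddChar.sum_mulShift _ (isPrimitive_stdAddChar N), ← sub_eq_add_neg, sub_eq_zero, ZMod.card]
  split_ifs <;> simp

lemma sum_norm_dft_sq (c : ZMod N → ℂ) : ∑ l, ‖𝓕 c l‖ ^ 2 = N * ∑ j, ‖c j‖ ^ 2 := by
  apply Complex.ofReal_injective
  push_cast
  simp_rw [← Complex.mul_conj', dft_apply, smul_eq_mul, map_sum, Finset.sum_mul_sum, map_mul]
  rw [Finset.sum_comm, Finset.mul_sum]
  refine Finset.sum_congr rfl fun j _ => ?_
  have orth : ∀ j', ∑ l, stdAddChar (-(j * l)) * c j * (conj (stdAddChar (-(j' * l))) * conj (c j'))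
      = c j * conj (c j') * if j = j' then (N : ℂ) else 0 := by
    intro j'
    have h := sum_stdAddChar_mul_mul_conj (-j) (-j')
    simp only [neg_inj] at h
    rw [← h, Finset.mul_sum]
    refine Finset.sum_congr rfl fun l _ => ?_
    rw [mul_neg, mul_neg, mul_comm l, mul_comm l]
    ring
  rw [Finset.sum_comm]
  simp_rw [orth, mul_ite, mul_zero, Finset.sum_ite_eq, Finset.mem_univ, if_true]
  ring

end ZMod

open ZMod

lemma tfShift_apply (M : ℕ) [NeZero M] (k l : ZMod M) (g : ZMod M → ℂ) (m : ZMod M) :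
    tfShift M k l g m = stdAddChar (l * m) * g (m - k) := by
  have hval : l * m = ((l.val * m.val : ℕ) : ZMod M) := by push_cast [natCast_zmod_val]; rfl
  rw [tfShift, hval, stdAddChar_apply, toCircle_natCast]
  push_cast
  ring_nf

lemma inn_tfShift (M : ℕ) [NeZero M] (k l : ZMod M) (x g : ZMod M → ℂ) :
    inn M x (tfShift M k l g) = 𝓕 (fun m => x m * conj (g (m - k))) l := by
  refine Finset.sum_congr rfl fun m _ => ?_
  rw [tfShift_apply, map_mul, conj_stdAddChar, smul_eq_mul, mul_comm l, ← mul_neg]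
  ring

lemma sum_norm_inn_tfShift_sq (M : ℕ) [NeZero M] (k : ZMod M) (x g : ZMod M → ℂ) :
    ∑ l, ‖inn M x (tfShift M k l g)‖ ^ 2 = M * ∑ m, ‖x m‖ ^ 2 * ‖g (m - k)‖ ^ 2 := by
  simp_rw [inn_tfShift, sum_norm_dft_sq, norm_mul, RCLike.norm_conj, mul_pow]

def windowMass (M : ℕ) (F : Finset (ZMod M)) (h : ZMod M → ℂ) (m : ZMod M) : ℝ :=
  M * ∑ k ∈ F, ‖h (m - k)‖ ^ 2

lemma sum_norm_inn_tfShift_sq_eq_sum_windowMass (M : ℕ) [NeZero M] (F : Finset (ZMod M))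
    (x g : ZMod M → ℂ) :
    ∑ kl ∈ F ×ˢ univ, ‖inn M x (tfShift M kl.1 kl.2 g)‖ ^ 2 =
      ∑ m, ‖x m‖ ^ 2 * windowMass M F g m := by
  simp_rw [Finset.sum_product, sum_norm_inn_tfShift_sq, windowMass, Finset.mul_sum]
  rw [Finset.sum_comm]
  exact Finset.sum_congr rfl fun m _ => Finset.sum_congr rfl fun k _ => by ring

lemma frame_bounds_of_windowMass_mem_Icc (M : ℕ) [NeZero M] (F : Finset (ZMod M))
    (g : ZMod M → ℂ) {a b : ℝ} (hg : ∀ m, windowMass M F g m ∈ Set.Icc a b) (x : ZMod M → ℂ) :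
    a * nsq M x ≤ ∑ kl ∈ F ×ˢ univ, ‖inn M x (tfShift M kl.1 kl.2 g)‖ ^ 2 ∧
      ∑ kl ∈ F ×ˢ univ, ‖inn M x (tfShift M kl.1 kl.2 g)‖ ^ 2 ≤ b * nsq M x := by
  rw [sum_norm_inn_tfShift_sq_eq_sum_windowMass, nsq, Finset.mul_sum, Finset.mul_sum]
  constructor <;> refine Finset.sum_le_sum fun m _ => ?_
  · rw [mul_comm]; exact mul_le_mul_of_nonneg_left (hg m).1 (by positivity)
  · rw [mul_comm b]; exact mul_le_mul_of_nonneg_left (hg m).2 (by positivity)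

lemma mgf_sq_gaussianReal (v : NNReal) {t : ℝ} (ht : 2 * v * t < 1) :
    mgf (fun x => x ^ 2) (gaussianReal 0 v) t = (√(1 - 2 * v * t))⁻¹ := by
  by_cases hv : v = 0
  · simp [hv, mgf]
  set b : ℝ := (1 - 2 * v * t) / (2 * v) with hb_def
  have hb : 0 < b := div_pos (by linarith) (by positivity)
  have hdens : ∀ x, gaussianPDFReal 0 v x • Real.exp (t * x ^ 2) =
      (√(2 * π * v))⁻¹ * Real.exp (-b * x ^ 2) := by
    intro x
    rw [gaussianPDFReal, smul_eq_mul, mul_assoc, ← Real.exp_add]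
    congr 2
    rw [hb_def]
    field_simp
    ring
  rw [mgf, integral_gaussianReal_eq_integral_smul hv]
  simp_rw [hdens]
  rw [integral_const_mul, integral_gaussian, ← Real.sqrt_inv, ← Real.sqrt_mul (by positivity),
    ← Real.sqrt_inv]
  congr 1
  rw [hb_def]
  field_simp

lemma exp_five_eighths_le_two : Real.exp (5 / 8) ≤ 2 := by
  rw [← Real.le_log_iff_exp_le two_pos]
  linarith [Real.log_two_gt_d9]

lemma five_le_exp_two : 5 ≤ Real.exp 2 := by
  have h : Real.exp 2 = Real.exp 1 * Real.exp 1 := by rw [← Real.exp_add]; norm_num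
  nlinarith [Real.exp_one_gt_d9]

section GammaTails

variable {Ω : Type*} [MeasurableSpace Ω] {P : Measure Ω} {S : Ω → ℝ} {n : ℕ}

lemma integrable_exp_mul_of_mgf_ne_zero {t : ℝ} (h : mgf S P t ≠ 0) :
    Integrable (fun ω => Real.exp (t * S ω)) P := by
  by_contra hS
  exact h (mgf_undef hS)

variable [IsFiniteMeasure P]

lemma measure_le_half_le_of_mgf_eq_inv_pow (hS : ∀ t < 1, mgf S P t = ((1 - t)⁻¹) ^ n) :
    P {ω | S ω ≤ n / 2} ≤ ENNReal.ofReal (Real.exp (-n / 8)) := by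
  have hmgf : mgf S P (-1) = (2⁻¹) ^ n := by rw [hS _ (by norm_num)]; norm_num
  have hint := integrable_exp_mul_of_mgf_ne_zero (hmgf.trans_ne (by positivity))
  rw [← ofReal_measureReal]
  refine ENNReal.ofReal_le_ofReal ((measure_le_le_exp_mul_mgf _ (by norm_num) hint).trans ?_)
  calc Real.exp (-(-1) * (n / 2)) * mgf S P (-1) = (Real.exp (1 / 2) * 2⁻¹) ^ n := by
        rw [hmgf, mul_pow, ← Real.exp_nat_mul]; ring_nf
    _ ≤ Real.exp (-1 / 8) ^ n := by
        gcongr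
        have h : Real.exp (1 / 2) = Real.exp (-1 / 8) * Real.exp (5 / 8) := by
          rw [← Real.exp_add]; norm_num
        nlinarith [exp_five_eighths_le_two, Real.exp_pos (-1 / 8)]
    _ = Real.exp (-n / 8) := by rw [← Real.exp_nat_mul]; ring_nf

lemma measure_five_mul_le_le_of_mgf_eq_inv_pow (hS : ∀ t < 1, mgf S P t = ((1 - t)⁻¹) ^ n) :
    P {ω | 5 * n ≤ S ω} ≤ ENNReal.ofReal (Real.exp (-2 * n)) := by
  have hmgf : mgf S P (4 / 5) = 5 ^ n := by rw [hS _ (by norm_num)]; norm_num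
  have hint := integrable_exp_mul_of_mgf_ne_zero (hmgf.trans_ne (by positivity))
  rw [← ofReal_measureReal]
  refine ENNReal.ofReal_le_ofReal ((measure_ge_le_exp_mul_mgf _ (by norm_num) hint).trans ?_)
  calc Real.exp (-(4 / 5) * (5 * n)) * mgf S P (4 / 5) = (Real.exp (-4) * 5) ^ n := by
        rw [hmgf, mul_pow, ← Real.exp_nat_mul]; ring_nf
    _ ≤ Real.exp (-2) ^ n := by
        gcongr
        have h : Real.exp (-2) = Real.exp (-4) * Real.exp 2 := by rw [← Real.exp_add]; norm_num
        nlinarith [five_le_exp_two, Real.exp_pos (-4)]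
    _ = Real.exp (-2 * n) := by rw [← Real.exp_nat_mul]; ring_nf

end GammaTails

lemma IsGaussianWindow.mgf_windowMass {M : ℕ} [NeZero M] {Ω : Type*} [MeasurableSpace Ω]
    {P : Measure Ω} [IsProbabilityMeasure P] {g : Ω → ZMod M → ℂ} (hg : IsGaussianWindow M P g)
    (F : Finset (ZMod M)) (m : ZMod M) {t : ℝ} (ht : t < 1) :
    mgf (fun ω => windowMass M F (g ω) m) P t = ((1 - t)⁻¹) ^ F.card := by
  obtain ⟨u, hmeas, hindep, hlaw, hrepr⟩ := hg
  set X : ZMod M × Bool → Ω → ℝ := fun i ω => M * u (m - i.1, i.2) ω ^ 2 with hX_def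
  have hX : (fun ω => windowMass M F (g ω) m) = ∑ i ∈ F ×ˢ univ, X i := by
    ext ω
    simp only [windowMass, Finset.sum_apply, Finset.sum_product, Fintype.sum_bool, hrepr,
      Complex.sq_norm, Complex.normSq_add_mul_I, Finset.mul_sum, X]
    exact Finset.sum_congr rfl fun k _ => by ring
  have hXmeas : ∀ i, Measurable (X i) := fun i => ((hmeas _).pow_const 2).const_mul _
  have hXindep : iIndepFun X P := by
    have hinj : Function.Injective (fun i : ZMod M × Bool => (m - i.1, i.2)) := by
      intro i j h
      simp only [Prod.mk.injEq, sub_right_inj] at h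
      exact Prod.ext h.1 h.2
    exact (hindep.precomp hinj).comp (fun _ x => (M : ℝ) * x ^ 2) fun _ => by fun_prop
  have hcoord : ∀ i, mgf (X i) P t = (√(1 - t))⁻¹ := by
    intro i
    have hM : (M : ℝ) ≠ 0 := NeZero.ne _
    have h := mgf_sq_gaussianReal (1 / (2 * M)) (t := M * t) (by push_cast; field_simp; linarith)
    rw [← hlaw (m - i.1, i.2), mgf_map (hmeas _).aemeasurable (by fun_prop),
      Function.comp_def] at h
    rw [hX_def, mgf_const_mul]
    convert h using 3
    push_cast
    field_simp
  rw [hX, hXindep.mgf_sum hXmeas, Finset.prod_congr rfl fun i _ => hcoord i, Finset.prod_const,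
    Finset.card_product, Finset.card_univ, Fintype.card_bool, pow_mul', inv_pow,
    Real.sq_sqrt (by linarith)]

lemma ofReal_one_sub_card_mul_le_measure_iInter {ι Ω : Type*} [Fintype ι] [MeasurableSpace Ω]
    {P : Measure Ω} [IsProbabilityMeasure P] (A : ι → Set Ω) {δ : ℝ} (hδ : 0 ≤ δ)
    (hA : ∀ i, P (A i)ᶜ ≤ ENNReal.ofReal δ) :
    ENNReal.ofReal (1 - Fintype.card ι * δ) ≤ P (⋂ i, A i) := by
  have hcompl : P (⋂ i, A i)ᶜ ≤ ENNReal.ofReal (Fintype.card ι * δ) :=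
    calc P (⋂ i, A i)ᶜ ≤ ∑ i, P (A i)ᶜ := by
          rw [Set.compl_iInter]; exact measure_iUnion_fintype_le _ _
      _ ≤ ∑ _ : ι, ENNReal.ofReal δ := Finset.sum_le_sum fun i _ => hA i
      _ = ENNReal.ofReal (Fintype.card ι * δ) := by
          rw [Finset.sum_const, Finset.card_univ, nsmul_eq_mul, ENNReal.ofReal_mul (by positivity),
            ENNReal.ofReal_natCast]
  rw [ENNReal.ofReal_sub _ (by positivity), ENNReal.ofReal_one]
  calc 1 - ENNReal.ofReal (Fintype.card ι * δ) ≤ 1 - P (⋂ i, A i)ᶜ := tsub_le_tsub_left hcompl 1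
    _ ≤ P (⋂ i, A i) := by
        rw [tsub_le_iff_right, ← measure_univ (μ := P), ← Set.union_compl_self (⋂ i, A i)]
        exact measure_union_le _ _

theorem stmt14_general (M : ℕ) [NeZero M] {Ω : Type*} [MeasurableSpace Ω] (P : Measure Ω)
    [IsProbabilityMeasure P] (g : Ω → ZMod M → ℂ) (hg : IsGaussianWindow M P g)
    (F : Finset (ZMod M)) :
    P {ω | ∀ x : ZMod M → ℂ,
        (F.card : ℝ) / 2 * nsq M x ≤
            ∑ kl ∈ F ×ˢ (Finset.univ : Finset (ZMod M)),
              ‖inn M x (tfShift M kl.1 kl.2 (g ω))‖ ^ 2 ∧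
          ∑ kl ∈ F ×ˢ (Finset.univ : Finset (ZMod M)),
              ‖inn M x (tfShift M kl.1 kl.2 (g ω))‖ ^ 2 ≤
            5 * (F.card : ℝ) * nsq M x} ≥
      ENNReal.ofReal
        (1 - (M : ℝ) * (Real.exp (-2 * F.card) + Real.exp (-(F.card : ℝ) / 8))) := by
  set good : ZMod M → Set Ω :=
    fun m => {ω | windowMass M F (g ω) m ∈ Set.Icc ((F.card : ℝ) / 2) (5 * F.card)}
  have hbad : ∀ m, P (good m)ᶜ ≤
      ENNReal.ofReal (Real.exp (-2 * F.card) + Real.exp (-(F.card : ℝ) / 8)) := by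
    intro m
    have hmgf := fun t (ht : t < 1) => hg.mgf_windowMass F m ht
    calc P (good m)ᶜ ≤ P ({ω | 5 * F.card ≤ windowMass M F (g ω) m} ∪
          {ω | windowMass M F (g ω) m ≤ F.card / 2}) := by
          refine measure_mono fun ω hω => ?_
          simp only [good, Set.mem_compl_iff, Set.mem_ofPred_eq, Set.mem_Icc, not_and_or,
            not_le] at hω
          exact hω.symm.imp le_of_lt le_of_lt
      _ ≤ _ := measure_union_le _ _
      _ ≤ _ := add_le_add (measure_five_mul_le_le_of_mgf_eq_inv_pow hmgf)
          (measure_le_half_le_of_mgf_eq_inv_pow hmgf)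
      _ = _ := (ENNReal.ofReal_add (by positivity) (by positivity)).symm
  have hP := ofReal_one_sub_card_mul_le_measure_iInter good (by positivity) hbad
  rw [ZMod.card] at hP
  exact hP.trans (measure_mono fun ω hω =>
    frame_bounds_of_windowMass_mem_Icc M F (g ω) (Set.mem_iInter.1 hω))

/-- For a complex Gaussian window and Λ = F × ℤ_M, with probability at least
1 − M(e^{−2|F|} + e^{−|F|/8}) the frame bounds |F|/2 and 5|F| hold. -/
theorem stmt14 (M : ℕ) [NeZero M] {Ω : Type*} [MeasurableSpace Ω] (P : Measure Ω)
    [IsProbabilityMeasure P] (g : Ω → ZMod M → ℂ) (hg : IsGaussianWindow M P g)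
    (F : Finset (ZMod M)) (hF : F.Nonempty) :
    P {ω | ∀ x : ZMod M → ℂ,
        (F.card : ℝ) / 2 * nsq M x ≤
            ∑ kl ∈ F ×ˢ (Finset.univ : Finset (ZMod M)),
              ‖inn M x (tfShift M kl.1 kl.2 (g ω))‖ ^ 2 ∧
          ∑ kl ∈ F ×ˢ (Finset.univ : Finset (ZMod M)),
              ‖inn M x (tfShift M kl.1 kl.2 (g ω))‖ ^ 2 ≤
            5 * (F.card : ℝ) * nsq M x} ≥
      ENNReal.ofReal
        (1 - (M : ℝ) * (Real.exp (-2 * F.card) + Real.exp (-(F.card : ℝ) / 8))) :=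
  stmt14_general M P g hg F
end
end
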